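/- Let q > 3 be a prime power, λ an integer with 1 < λ < q - 1 and λ dividing q - 1. Then (q - 1 + λ)/λ is a q-cyclotomic coset leader modulo (q^m - 1)/λ for every m ≥ 2. -/

import Mathlib

/-!
Write `a = (q - 1 + λ) / λ` and `N = (q ^ m - 1) / λ`, so that `λ a = q - 1 + λ` and
`λ N = q ^ m - 1`. As `q ^ m ≡ 1 [MOD N]`, only the exponents `j < m` matter. For `j ≤ m - 2`
the product `a q ^ j` is still below `N`, hence reduced and at least `a`. For `j = m - 1`,
`λ (a q ^ (m - 1) - N) = (λ - 1) q ^ (m - 1) + 1`, which lies in `[λ a, λ N)` as soon as `λ ≥ 2`.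
-/

/-- The q-cyclotomic coset of `a` modulo `N`. -/
def qCoset (q N a : ℕ) : Set ℕ := {b | ∃ j : ℕ, b = a * q ^ j % N}

/-- The coset leader: the smallest element of the q-cyclotomic coset of `a` modulo `N`. -/
noncomputable def cosetLeader (q N a : ℕ) : ℕ := sInf (qCoset q N a)

/-- `a` is a coset leader modulo `N` if it is the minimum of its own coset. -/
def IsCosetLeader (q N a : ℕ) : Prop := a = cosetLeader q N a

section CosetLeader

variable {q N a : ℕ}

theorem self_mem_qCoset (ha : a < N) : a ∈ qCoset q N a :=
  ⟨0, by simp [Nat.mod_eq_of_lt ha]⟩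

theorem isCosetLeader_of_le_mul_pow_mod (ha : a < N) (h : ∀ j, a ≤ a * q ^ j % N) :
    IsCosetLeader q N a :=
  le_antisymm (le_csInf ⟨a, self_mem_qCoset ha⟩ fun _ ⟨j, hj⟩ => hj ▸ h j)
    (Nat.sInf_le (self_mem_qCoset ha))

theorem mul_pow_modEq_mul_pow_mod {m : ℕ} (h : q ^ m ≡ 1 [MOD N]) (j : ℕ) :
    a * q ^ j ≡ a * q ^ (j % m) [MOD N] := by
  conv_lhs => rw [← Nat.div_add_mod j m, pow_add, pow_mul]
  simpa using ((h.pow (j / m)).mul_right (q ^ (j % m))).mul_left a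

end CosetLeader

namespace qCoset

variable {q lam N a Q : ℕ}

theorem mul_lt_of_mul_le (hlam : 0 < lam) (hlq : lam < q) (ha : lam * a + 1 = q + lam)
    (hN : lam * N + 1 = q * Q) {t : ℕ} (ht : 0 < t) (htQ : q * t ≤ Q) : a * t < N := by
  have hqt : q * (q * t) ≤ q * Q := Nat.mul_le_mul_left q htQ
  have hat : (lam * a + 1) * t = (q + lam) * t := by rw [ha]
  have : lam * (a * t) < lam * N := by nlinarith
  exact Nat.lt_of_mul_lt_mul_left this

theorem le_mul_mod (hlam : 2 ≤ lam) (hlq : lam < q) (ha : lam * a + 1 = q + lam)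
    (hN : lam * N + 1 = q * Q) (hqQ : q ≤ Q) : a ≤ a * Q % N := by
  have hNle : N ≤ a * Q := by
    have : lam * N ≤ lam * (a * Q) := by nlinarith
    exact Nat.le_of_mul_le_mul_left this (by omega)
  have hlt : a * Q < 2 * N := by
    have : lam * (a * Q) < lam * (2 * N) := by nlinarith
    exact Nat.lt_of_mul_lt_mul_left this
  have hge : a + N ≤ a * Q := by
    have : lam * (a + N) ≤ lam * (a * Q) := by nlinarith
    exact Nat.le_of_mul_le_mul_left this (by omega)
  rw [Nat.mod_eq_sub_mod hNle, Nat.mod_eq_of_lt (by omega)]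
  omega

end qCoset

theorem isCosetLeader_sub_one_add_div {q lam m : ℕ} (hq : 1 < q) (hlam : 1 < lam)
    (hdvd : lam ∣ q - 1) (hm : 2 ≤ m) : IsCosetLeader q ((q ^ m - 1) / lam) ((q - 1 + lam) / lam) := by
  have hlq : lam < q := by have := Nat.le_of_dvd (by omega) hdvd; omega
  have hqm : 1 ≤ q ^ m := Nat.one_le_pow _ _ (by omega)
  have hN : lam * ((q ^ m - 1) / lam) + 1 = q ^ m := by
    rw [Nat.mul_div_cancel' (hdvd.trans (by simpa using Nat.sub_dvd_pow_sub_pow q 1 m))]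
    omega
  have ha : lam * ((q - 1 + lam) / lam) + 1 = q + lam := by
    rw [Nat.mul_div_cancel' ((Nat.dvd_add_left dvd_rfl).mpr hdvd)]
    omega
  set N := (q ^ m - 1) / lam
  set a := (q - 1 + lam) / lam
  have hqQ : q ^ m = q * q ^ (m - 1) := by rw [← pow_succ']; congr 1; omega
  rw [hqQ] at hN
  have hlow {i : ℕ} (hi : i + 2 ≤ m) : a * q ^ i < N := by
    refine qCoset.mul_lt_of_mul_le (by omega) hlq ha hN (by positivity) ?_
    rw [← pow_succ']
    exact Nat.pow_le_pow_right (by omega) (by omega)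
  have hperiod : q ^ m ≡ 1 [MOD N] := by
    rw [Nat.ModEq, hqQ, ← hN, Nat.mul_add_mod_self_right]
  refine isCosetLeader_of_le_mul_pow_mod (by simpa using hlow hm) fun j => ?_
  rw [mul_pow_modEq_mul_pow_mod hperiod j]
  have hj : j % m < m := Nat.mod_lt _ (by omega)
  rcases (show j % m + 2 ≤ m ∨ j % m = m - 1 by omega) with hi | hi
  · rw [Nat.mod_eq_of_lt (hlow hi)]
    exact Nat.le_mul_of_pos_right a (by positivity)
  · rw [hi]
    exact qCoset.le_mul_mod hlam hlq ha hN (Nat.le_self_pow (by omega) q)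

theorem stmt_9_general (q lam : ℕ) (hq3 : 3 < q)
    (hl1 : 1 < lam) (hl : lam ∣ q - 1) :
    ∀ m : ℕ, 2 ≤ m → IsCosetLeader q ((q ^ m - 1) / lam) ((q - 1 + lam) / lam) :=
  fun _ hm => isCosetLeader_sub_one_add_div (by omega) hl1 hl hm

theorem stmt_9 (q lam : ℕ) (hq : IsPrimePow q) (hq3 : 3 < q)
    (hl1 : 1 < lam) (hl2 : lam < q - 1) (hl : lam ∣ q - 1) :
    ∀ m : ℕ, 2 ≤ m → IsCosetLeader q ((q ^ m - 1) / lam) ((q - 1 + lam) / lam) :=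
  stmt_9_general q lam hq3 hl1 hl
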